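/- For every $\rho \in [-1, 1]$, the ReLU dual activation satisfies $\widehat{R}(\rho) := \frac{\sqrt{1-\rho^2} + (\pi - \cos^{-1}(\rho))\rho}{\pi} \leq \frac{1+\rho}{2}$. -/

import Mathlib

/-! On `(-1, 1)` the derivative of `Rhat` is `(π - arccos ρ) / π`, which is increasing, so `Rhat` is
convex on `[-1, 1]` and lies below its chord from `Rhat (-1) = 0` to `Rhat 1 = 1`. -/

open Real

/-- The dual activation of the ReLU. -/
noncomputable def Rhat (ρ : ℝ) : ℝ :=
  (Real.sqrt (1 - ρ ^ 2) + (π - Real.arccos ρ) * ρ) / π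

lemma continuous_Rhat : Continuous Rhat := by
  unfold Rhat
  fun_prop

lemma hasDerivAt_Rhat {ρ : ℝ} (hρ : ρ ∈ Set.Ioo (-1 : ℝ) 1) :
    HasDerivAt Rhat ((π - arccos ρ) / π) ρ := by
  have hpos : 0 < 1 - ρ ^ 2 := by nlinarith [hρ.1, hρ.2]
  have hsqrt := ((hasDerivAt_pow 2 ρ).const_sub 1).sqrt hpos.ne'
  have harccos := hasDerivAt_arccos hρ.1.ne' hρ.2.ne
  have hsqrt_ne : √(1 - ρ ^ 2) ≠ 0 := (sqrt_pos.2 hpos).ne'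
  refine ((hsqrt.add ((harccos.const_sub π).mul (hasDerivAt_id ρ))).div_const π).congr_deriv ?_
  simp only [id]
  field_simp
  ring

lemma convexOn_Rhat : ConvexOn ℝ (Set.Icc (-1) 1) Rhat := by
  refine MonotoneOn.convexOn_of_deriv (convex_Icc _ _) continuous_Rhat.continuousOn
    (fun ρ hρ => ?_) (fun x hx y hy hxy => ?_)
  · rw [interior_Icc] at hρ
    exact (hasDerivAt_Rhat hρ).differentiableAt.differentiableWithinAt
  · rw [interior_Icc] at hx hy
    rw [(hasDerivAt_Rhat hx).deriv, (hasDerivAt_Rhat hy).deriv]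
    gcongr

lemma Rhat_one : Rhat 1 = 1 := by
  simp [Rhat, pi_ne_zero]

lemma Rhat_neg_one : Rhat (-1) = 0 := by
  simp [Rhat]

/-- For every `ρ ∈ [-1, 1]`, `Rhat ρ ≤ (1 + ρ) / 2`. -/
theorem stmt_4 (ρ : ℝ) (hρ : ρ ∈ Set.Icc (-1 : ℝ) 1) :
    Rhat ρ ≤ (1 + ρ) / 2 := by
  have hρ' : ((1 + ρ) / 2) • (1 : ℝ) + ((1 - ρ) / 2) • (-1 : ℝ) = ρ := by
    simp only [smul_eq_mul]
    ring
  have hchord := convexOn_Rhat.2 (Set.right_mem_Icc.2 (by norm_num)) (Set.left_mem_Icc.2 (by norm_num))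
    (by linarith [hρ.1] : 0 ≤ (1 + ρ) / 2) (by linarith [hρ.2] : 0 ≤ (1 - ρ) / 2) (by ring)
  rwa [hρ', Rhat_one, Rhat_neg_one, smul_zero, add_zero, smul_eq_mul, mul_one] at hchord
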